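/- arXiv:1706.06844 — 4 statements merged into one kernel-verified Lean document; each statement's English description precedes it below -/
import Mathlib

section
/- Let γ ∈ (1,2). Then the WSGD weights satisfy: w_0^{(γ)} = γ/2, w_1^{(γ)} = (2-γ-γ²)/2 < 0, w_2^{(γ)} = γ(γ²+γ-4)/4, and the tail is monotonically decreasing and nonnegative below w_0^{(γ)}: namely 1 ≥ w_0^{(γ)} ≥ w_3^{(γ)} ≥ w_4^{(γ)} ≥ ⋯ ≥ 0, i.e. w_3^{(γ)} ≤ w_0^{(γ)} ≤ 1 and w_k^{(γ)} ≥ w_{k+1}^{(γ)} ≥ 0 for all k ≥ 3. -/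
open scoped Real Topology

/-- Alternating fractional binomial coefficients
`g_k^{(γ)} = (-1)^k (γ choose k) = ((-1)^k / k!) · γ(γ-1)⋯(γ-k+1)`. -/
noncomputable def gcoef (γ : ℝ) (k : ℕ) : ℝ :=
  (-1 : ℝ) ^ k / (Nat.factorial k) * ∏ i ∈ Finset.range k, (γ - i)

/-- WSGD weights: `w_0^{(γ)} = (γ/2) g_0^{(γ)}`,
`w_k^{(γ)} = (γ/2) g_k^{(γ)} + ((2-γ)/2) g_{k-1}^{(γ)}` for `k ≥ 1`. -/
noncomputable def w (γ : ℝ) : ℕ → ℝ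
  | 0 => γ / 2 * gcoef γ 0
  | (k + 1) => γ / 2 * gcoef γ (k + 1) + (2 - γ) / 2 * gcoef γ k

/-! For `1 ≤ γ ≤ 2` the ratio `g_{k+1}/g_k = (k - γ)/(k + 1)` lies in `[0, 1]` once `k ≥ 2`, and
`g_2 = γ(γ-1)/2 ≥ 0`; so `(g_k)_{k ≥ 2}` is nonnegative and nonincreasing. For `k ≥ 3` the weight
`w_k = (γ/2) g_k + ((2-γ)/2) g_{k-1}` has nonnegative coefficients, so it inherits both
properties. The claims about `w_0, …, w_3` are polynomial inequalities in `γ`. -/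

section gcoef

variable (γ : ℝ)

lemma gcoef_succ (k : ℕ) : gcoef γ (k + 1) = gcoef γ k * ((k - γ) / (k + 1)) := by
  have hk : (Nat.factorial k : ℝ) ≠ 0 := by exact_mod_cast Nat.factorial_ne_zero k
  simp only [gcoef, Finset.prod_range_succ, pow_succ, Nat.factorial_succ]
  push_cast
  field_simp
  ring

@[simp] lemma gcoef_zero : gcoef γ 0 = 1 := by simp [gcoef]

lemma gcoef_one : gcoef γ 1 = -γ := by simp [gcoef_succ]

lemma gcoef_two : gcoef γ 2 = γ * (γ - 1) / 2 := by
  rw [gcoef_succ, gcoef_one]; push_cast; ring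

variable {γ}

lemma gcoef_nonneg (hγ1 : 1 ≤ γ) (hγ2 : γ ≤ 2) {k : ℕ} (hk : 2 ≤ k) : 0 ≤ gcoef γ k := by
  induction k, hk using Nat.le_induction with
  | base => rw [gcoef_two]; nlinarith
  | succ k hk ih =>
    have hkγ : γ ≤ k := le_trans hγ2 (by exact_mod_cast hk)
    rw [gcoef_succ]
    exact mul_nonneg ih (div_nonneg (sub_nonneg.2 hkγ) (by positivity))

lemma gcoef_succ_le (hγ1 : 1 ≤ γ) (hγ2 : γ ≤ 2) {k : ℕ} (hk : 2 ≤ k) :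
    gcoef γ (k + 1) ≤ gcoef γ k := by
  have hratio : ((k : ℝ) - γ) / (k + 1) ≤ 1 := by
    rw [div_le_one (by positivity)]
    linarith
  rw [gcoef_succ]
  exact mul_le_of_le_one_right (gcoef_nonneg hγ1 hγ2 hk) hratio

end gcoef

section w

variable (γ : ℝ)

lemma w_succ (k : ℕ) : w γ (k + 1) = γ / 2 * gcoef γ (k + 1) + (2 - γ) / 2 * gcoef γ k := rfl

lemma w_zero : w γ 0 = γ / 2 := by simp [w]

lemma w_one : w γ 1 = (2 - γ - γ ^ 2) / 2 := by
  rw [w_succ, zero_add, gcoef_one, gcoef_zero]; ring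

lemma w_two : w γ 2 = γ * (γ ^ 2 + γ - 4) / 4 := by
  rw [w_succ, gcoef_succ, gcoef_one]; push_cast; ring

lemma w_three : w γ 3 = γ * (γ - 1) * (2 - γ) * (γ + 3) / 12 := by
  rw [w_succ, gcoef_succ, gcoef_two]; push_cast; ring

variable {γ}

lemma w_nonneg (hγ1 : 1 ≤ γ) (hγ2 : γ ≤ 2) {k : ℕ} (hk : 3 ≤ k) : 0 ≤ w γ k := by
  obtain ⟨j, rfl⟩ : ∃ j, k = j + 1 := ⟨k - 1, by omega⟩
  rw [w_succ]
  exact add_nonneg (mul_nonneg (by linarith) (gcoef_nonneg hγ1 hγ2 (by omega)))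
    (mul_nonneg (by linarith) (gcoef_nonneg hγ1 hγ2 (by omega)))

lemma w_succ_le (hγ1 : 1 ≤ γ) (hγ2 : γ ≤ 2) {k : ℕ} (hk : 3 ≤ k) : w γ (k + 1) ≤ w γ k := by
  obtain ⟨j, rfl⟩ : ∃ j, k = j + 1 := ⟨k - 1, by omega⟩
  rw [w_succ, w_succ]
  exact add_le_add
    (mul_le_mul_of_nonneg_left (gcoef_succ_le hγ1 hγ2 (by omega)) (by linarith))
    (mul_le_mul_of_nonneg_left (gcoef_succ_le hγ1 hγ2 (by omega)) (by linarith))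

end w

theorem wsgd_weights_properties (γ : ℝ) (hγ1 : 1 < γ) (hγ2 : γ < 2) :
    w γ 0 = γ / 2 ∧
    w γ 1 = (2 - γ - γ ^ 2) / 2 ∧ w γ 1 < 0 ∧
    w γ 2 = γ * (γ ^ 2 + γ - 4) / 4 ∧
    w γ 0 ≤ 1 ∧ w γ 3 ≤ w γ 0 ∧
    (∀ k : ℕ, 3 ≤ k → w γ (k + 1) ≤ w γ k ∧ 0 ≤ w γ k) := by
  refine ⟨w_zero γ, w_one γ, ?_, w_two γ, ?_, ?_, fun k hk =>
    ⟨w_succ_le hγ1.le hγ2.le hk, w_nonneg hγ1.le hγ2.le hk⟩⟩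
  · rw [w_one]; nlinarith
  · rw [w_zero]; linarith
  · -- `(γ - 1)(2 - γ) ≤ 1/4` and `γ + 3 < 5`
    rw [w_three, w_zero]
    nlinarith [mul_pos (sub_pos.2 hγ1) (sub_pos.2 hγ2), sq_nonneg (2 * γ - 3)]
end

section
/- Let γ ∈ (1,2). Then for every ξ ∈ ℝ the symbol f_γ admits the closed form f_γ(ξ) := -∑_{k=-1}^∞ w_{k+1}^{(γ)} e^{i k ξ} = -[(2 - γ(1 - e^{-iξ}))/2] · (1 + e^{i(ξ+π)})^γ, where z^γ for a complex number z with |z| ≤ 1 is defined through the binomial series (1+u)^γ = ∑_{k=0}^∞ (γ choose k) u^k applied with u = e^{i(ξ+π)} (equivalently, the principal branch of the power, with the value 0 at u = -1). -/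
open scoped Real Topology

/-- The symbol `f_γ(ξ) = -∑_{k=-1}^∞ w_{k+1}^{(γ)} e^{ikξ}`
(written as a sum over `k+1 ∈ ℕ`). -/
noncomputable def fsym (γ : ℝ) (ξ : ℝ) : ℂ :=
  -∑' k : ℕ, (w γ k : ℂ) * Complex.exp (Complex.I * ((k : ℂ) - 1) * (ξ : ℂ))

/-- Generalized binomial coefficient `(γ choose k) = γ(γ-1)⋯(γ-k+1)/k!`. -/
noncomputable def binom (γ : ℝ) (k : ℕ) : ℝ :=
  (∏ i ∈ Finset.range k, (γ - i)) / (Nat.factorial k)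

/-! Since `gcoef γ k = (-1)^k (γ choose k)`, the series `∑ gcoef γ k z^k` is the binomial series
of `(1 - z)^γ`, which converges absolutely on `|z| = 1` for `1 ≤ γ ≤ 3`: for `k ≥ 2` the ratio
`|γ - k|/(k+1) ≤ (k-1)/(k+1)` of consecutive coefficients telescopes to
`|(γ choose k+2)| ≤ γ(γ-1)/((k+1)(k+2))`. The WSGD weights are the coefficients of
`(γ/2 + (2-γ)/2 z) ∑ gcoef γ k z^k`, so with `z = e^{iξ}` the symbol is
`-(γ/2 + (2-γ)/2 e^{iξ}) e^{-iξ} ∑ (γ choose k) (-e^{iξ})^k`, and `-e^{iξ} = e^{i(ξ+π)}`. -/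

theorem binom_succ (γ : ℝ) (k : ℕ) : binom γ (k + 1) = binom γ k * (γ - k) / (k + 1) := by
  rw [binom, binom, Finset.prod_range_succ, Nat.factorial_succ]
  push_cast
  field_simp

theorem gcoef_eq_neg_one_pow_mul_binom (γ : ℝ) (k : ℕ) : gcoef γ k = (-1) ^ k * binom γ k := by
  rw [gcoef, binom]
  ring

theorem abs_binom_add_two_le {γ : ℝ} (hγ1 : 1 ≤ γ) (hγ3 : γ ≤ 3) (k : ℕ) :
    |binom γ (k + 2)| ≤ γ * (γ - 1) / ((k + 1) * (k + 2)) := by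
  have hγγ : 0 ≤ γ * (γ - 1) := by nlinarith
  induction k with
  | zero => norm_num [binom, Finset.prod_range_succ, abs_div, abs_of_nonneg hγγ]
  | succ k ih =>
    have hk : |γ - (k + 2 : ℕ)| ≤ k + 1 := abs_le.2 ⟨by push_cast; linarith, by push_cast; linarith⟩
    rw [binom_succ, abs_div, abs_mul, abs_of_pos (by positivity : (0 : ℝ) < (k + 2 : ℕ) + 1)]
    calc |binom γ (k + 2)| * |γ - (k + 2 : ℕ)| / ((k + 2 : ℕ) + 1)
        ≤ γ * (γ - 1) / ((k + 1) * (k + 2)) * (k + 1) / ((k + 2 : ℕ) + 1) := by gcongr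
      _ = γ * (γ - 1) / (((k + 1 : ℕ) + 1) * ((k + 1 : ℕ) + 2)) := by
        push_cast
        field_simp
        ring

theorem summable_binom_mul_pow {γ : ℝ} (hγ1 : 1 ≤ γ) (hγ3 : γ ≤ 3) {u : ℂ} (hu : ‖u‖ ≤ 1) :
    Summable fun k ↦ (binom γ k : ℂ) * u ^ k := by
  have hinv_sq : Summable fun k : ℕ ↦ 1 / ((k : ℝ) + 1) ^ 2 := by
    simpa using (summable_nat_add_iff 1).2 (Real.summable_one_div_nat_pow.2 one_lt_two)
  rw [← summable_nat_add_iff 2]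
  refine .of_norm_bounded (hinv_sq.mul_left (γ * (γ - 1))) fun k ↦ ?_
  have hγγ : 0 ≤ γ * (γ - 1) := by nlinarith
  calc ‖(binom γ (k + 2) : ℂ) * u ^ (k + 2)‖ ≤ |binom γ (k + 2)| := by
        rw [norm_mul, norm_pow, Complex.norm_real, Real.norm_eq_abs]
        exact mul_le_of_le_one_right (abs_nonneg _) (pow_le_one₀ (norm_nonneg u) hu)
    _ ≤ γ * (γ - 1) / ((k + 1) * (k + 2)) := abs_binom_add_two_le hγ1 hγ3 k
    _ ≤ γ * (γ - 1) * (1 / ((k : ℝ) + 1) ^ 2) := by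
        rw [← div_eq_mul_one_div, sq]
        gcongr
        linarith

theorem HasSum.of_succ_eq_mul_add_mul {R : Type*} [Ring R] [TopologicalSpace R]
    [IsTopologicalRing R] {f g : ℕ → R} {S : R} (hf : HasSum f S) (α β : R)
    (h0 : g 0 = α * f 0) (hsucc : ∀ k, g (k + 1) = α * f (k + 1) + β * f k) :
    HasSum g ((α + β) * S) := by
  rw [← hasSum_nat_add_iff' 1]
  have hf' : HasSum (fun k ↦ f (k + 1)) (S - f 0) := by
    simpa using (hasSum_nat_add_iff' 1).2 hf
  have hS : (α + β) * S - α * f 0 = α * (S - f 0) + β * S := by noncomm_ring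
  simpa only [hsucc, Finset.sum_range_one, h0, hS] using (hf'.mul_left α).add (hf.mul_left β)

theorem hasSum_w_mul_pow {γ : ℝ} {z S : ℂ} (h : HasSum (fun k ↦ (gcoef γ k : ℂ) * z ^ k) S) :
    HasSum (fun k ↦ (w γ k : ℂ) * z ^ k) ((γ / 2 + (2 - γ) / 2 * z) * S) := by
  refine h.of_succ_eq_mul_add_mul _ _ (by simp [w]) fun k ↦ ?_
  simp only [w]
  push_cast
  ring

theorem fsym_eq_neg_tsum_mul (γ ξ : ℝ) :
    fsym γ ξ = -((∑' k : ℕ, (w γ k : ℂ) * Complex.exp (Complex.I * ξ) ^ k) *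
      Complex.exp (-Complex.I * ξ)) := by
  rw [fsym, ← tsum_mul_right]
  congr 1
  refine tsum_congr fun k ↦ ?_
  rw [← Complex.exp_nat_mul, mul_assoc _ (Complex.exp _), ← Complex.exp_add]
  ring_nf

/-- Closed form of the symbol:
`f_γ(ξ) = -[(2 - γ(1 - e^{-iξ}))/2] · (1 + e^{i(ξ+π)})^γ`, where the fractional power
`(1+u)^γ` is defined through the binomial series `∑_{k=0}^∞ (γ choose k) u^k`
with `u = e^{i(ξ+π)}`. -/
theorem fsym_closed_form (γ : ℝ) (hγ1 : 1 < γ) (hγ2 : γ < 2) (ξ : ℝ) :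
    fsym γ ξ =
      -((2 - (γ : ℂ) * (1 - Complex.exp (-Complex.I * (ξ : ℂ)))) / 2) *
        ∑' k : ℕ, (binom γ k : ℂ) * Complex.exp (Complex.I * ((ξ : ℂ) + (Real.pi : ℂ))) ^ k := by
  set z := Complex.exp (Complex.I * ξ)
  have hu : Complex.exp (Complex.I * (ξ + π)) = -z := by
    rw [mul_add, Complex.exp_add, mul_comm Complex.I (π : ℂ), Complex.exp_pi_mul_I, mul_neg_one]
  have hze : z * Complex.exp (-Complex.I * ξ) = 1 := by
    rw [← Complex.exp_add, neg_mul, add_neg_cancel, Complex.exp_zero]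
  have hS := (summable_binom_mul_pow hγ1.le (by linarith) (by rw [norm_neg, Complex.norm_exp_I_mul_ofReal])
    (u := -z)).hasSum
  have hg : HasSum (fun k ↦ (gcoef γ k : ℂ) * z ^ k) (∑' k : ℕ, (binom γ k : ℂ) * (-z) ^ k) := by
    convert hS using 2 with k
    rw [gcoef_eq_neg_one_pow_mul_binom, neg_pow]
    push_cast
    ring
  rw [fsym_eq_neg_tsum_mul, (hasSum_w_mul_pow hg).tsum_eq, hu]
  linear_combination (-(2 - γ) / 2 * ∑' k : ℕ, (binom γ k : ℂ) * (-z) ^ k) * hze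
end

section
/- (Ruge–Stüben two-grid convergence bound.) Let A be an N×N Hermitian positive definite matrix, let D be the diagonal matrix having the same diagonal as A, let S be an N×N matrix, and let P be an N×k matrix of full rank with k < N. Suppose there exists δ > 0 such that for all x ∈ ℂ^N, ‖Sx‖²_A ≤ ‖x‖²_A − δ‖x‖²_{AD^{-1}A} (smoothing property), and there exists ξ > 0 such that for all x ∈ ℂ^N, min_{y ∈ ℂ^k} ‖x − Py‖²_D ≤ ξ‖x‖²_A (approximation property). Then ξ ≥ δ, and the two-grid iteration matrix TGM = S·[I − P(P*AP)^{-1}P*A] satisfies ‖TGM‖_A ≤ √(1 − δ/ξ). -/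
/-!
The coarse-grid correction `E = I − P(P*AP)⁻¹P*A` is the `A`-orthogonal projection onto the
`A`-orthogonal complement of `range P`: it does not increase `‖·‖_A`, and every `e = Ex` satisfies
`P*Ae = 0`. For such `e` and any `y`, `‖e‖²_A = ⟨D⁻¹Ae, D(e − Py)⟩`, so Cauchy–Schwarz in the
`D`-inner product and the approximation property give `‖e‖²_A ≤ ξ‖e‖²_{AD⁻¹A}`, which turns the
smoothing property into `‖Se‖²_A ≤ (1 − δ/ξ)‖e‖²_A`. As `k < N`, some `e ≠ 0` has `P*Ae = 0`,
and the bound at that `e` forces `δ ≤ ξ`.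
-/

open Matrix
open scoped ComplexOrder

/-- The squared energy (semi)norm `‖x‖²_A = re(x* A x)` associated with a matrix `A`. -/
noncomputable def quad {n : Type*} [Fintype n] (A : Matrix n n ℂ) (x : n → ℂ) : ℝ :=
  (dotProduct (star x) (A.mulVec x)).re

namespace Matrix

variable {n m : Type*} [Fintype n] [Fintype m]

theorem quad_conjTranspose_mul_mul (M : Matrix n n ℂ) (C : Matrix n m ℂ) (x : m → ℂ) :
    quad (Cᴴ * M * C) x = quad M (C *ᵥ x) := by
  rw [quad, quad, star_mulVec, mulVec_mulVec, ← dotProduct_mulVec, mulVec_mulVec, Matrix.mul_assoc]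

theorem quad_nonneg {M : Matrix n n ℂ} (hM : M.PosSemidef) (x : n → ℂ) : 0 ≤ quad M x :=
  hM.re_dotProduct_nonneg x

theorem quad_pos {M : Matrix n n ℂ} (hM : M.PosDef) {x : n → ℂ} (hx : x ≠ 0) :
    0 < quad M x :=
  hM.re_dotProduct_pos hx

theorem star_dotProduct_mulVec_eq_zero {P : Matrix n m ℂ} {w : n → ℂ} (hw : Pᴴ *ᵥ w = 0)
    (y : m → ℂ) : star w ⬝ᵥ (P *ᵥ y) = 0 := by
  rw [dotProduct_mulVec, ← conjTranspose_conjTranspose P, ← star_mulVec, hw, star_zero,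
    zero_dotProduct]

theorem IsHermitian.star_mulVec_dotProduct {A : Matrix n n ℂ} (hA : A.IsHermitian)
    (u v : n → ℂ) : star (A *ᵥ u) ⬝ᵥ v = star u ⬝ᵥ (A *ᵥ v) := by
  rw [star_mulVec, hA.eq, dotProduct_mulVec]

theorem IsHermitian.quad_add {A : Matrix n n ℂ} (hA : A.IsHermitian) {u v : n → ℂ}
    (huv : star (A *ᵥ u) ⬝ᵥ v = 0) : quad A (u + v) = quad A u + quad A v := by
  have hvu : star v ⬝ᵥ (A *ᵥ u) = 0 := by
    rw [star_dotProduct, huv, star_zero]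
  rw [hA.star_mulVec_dotProduct] at huv
  simp only [quad, star_add, mulVec_add, add_dotProduct, dotProduct_add, huv, hvu, add_zero,
    zero_add, Complex.add_re]

open scoped MatrixOrder in
theorem PosSemidef.norm_dotProduct_mulVec_sq_le {M : Matrix n n ℂ} (hM : M.PosSemidef)
    (u w : n → ℂ) : ‖star u ⬝ᵥ (M *ᵥ w)‖ ^ 2 ≤ quad M u * quad M w := by
  classical
  obtain ⟨B, rfl⟩ := CStarAlgebra.nonneg_iff_eq_star_mul_self.mp hM.nonneg
  have hinner (a b : n → ℂ) : star a ⬝ᵥ ((star B * B) *ᵥ b) =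
      inner ℂ (WithLp.toLp 2 (B *ᵥ a) : EuclideanSpace ℂ n) (WithLp.toLp 2 (B *ᵥ b)) := by
    rw [EuclideanSpace.inner_toLp_toLp, dotProduct_comm (B *ᵥ b), star_mulVec, ← dotProduct_mulVec,
      mulVec_mulVec, star_eq_conjTranspose]
  simp only [quad, hinner, ← RCLike.re_to_complex, inner_self_eq_norm_sq, ← mul_pow]
  exact pow_le_pow_left₀ (norm_nonneg _) (norm_inner_le_norm (𝕜 := ℂ) _ _) 2

theorem exists_ne_zero_mulVec_eq_zero_of_card_lt {K : Type*} [Field K] (M : Matrix m n K)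
    (h : Fintype.card m < Fintype.card n) : ∃ v ≠ 0, M *ᵥ v = 0 := by
  classical
  have hker := LinearMap.ker_ne_bot_of_finrank_lt (f := M.mulVecLin) (by simpa using h)
  obtain ⟨v, hv, hv0⟩ := (Submodule.ne_bot_iff _).mp hker
  exact ⟨v, hv0, hv⟩

variable [DecidableEq n]

theorem IsHermitian.sq_quad_le_quad_mul_quad_sub {A D : Matrix n n ℂ} (hA : A.IsHermitian)
    (hD : D.PosDef) {e v : n → ℂ} (hv : star (A *ᵥ e) ⬝ᵥ v = 0) :
    quad A e ^ 2 ≤ quad (A * D⁻¹ * A) e * quad D (e - v) := by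
  have hDinv : D⁻¹ * D = 1 := nonsing_inv_mul D ((isUnit_iff_isUnit_det D).mp hD.isUnit)
  have hDA : (D⁻¹ * A)ᴴ = A * D⁻¹ := by
    rw [conjTranspose_mul, hA.eq, hD.inv.isHermitian.eq]
  set u := (D⁻¹ * A) *ᵥ e
  have hc : star u ⬝ᵥ (D *ᵥ (e - v)) = star e ⬝ᵥ (A *ᵥ e) := by
    rw [star_mulVec, hDA, dotProduct_mulVec, vecMul_vecMul, Matrix.mul_assoc, hDinv,
      Matrix.mul_one, dotProduct_sub, ← dotProduct_mulVec, ← dotProduct_mulVec,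
      ← hA.star_mulVec_dotProduct e v, hv, sub_zero]
  have hu : quad D u = quad (A * D⁻¹ * A) e := by
    rw [← quad_conjTranspose_mul_mul, hDA, Matrix.mul_assoc A, hDinv, Matrix.mul_one,
      Matrix.mul_assoc]
  calc quad A e ^ 2 ≤ ‖star e ⬝ᵥ (A *ᵥ e)‖ ^ 2 := by
        rw [← sq_abs]; exact pow_le_pow_left₀ (abs_nonneg _) (Complex.abs_re_le_norm _) 2
    _ = ‖star u ⬝ᵥ (D *ᵥ (e - v))‖ ^ 2 := by rw [hc]
    _ ≤ quad D u * quad D (e - v) := hD.posSemidef.norm_dotProduct_mulVec_sq_le _ _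
    _ = quad (A * D⁻¹ * A) e * quad D (e - v) := by rw [hu]

theorem IsHermitian.quad_le_mul_quad_of_quad_sub_le {A D : Matrix n n ℂ} (hA : A.IsHermitian)
    (hD : D.PosDef) {ξ : ℝ} (hξ : 0 ≤ ξ) {e v : n → ℂ} (hv : star (A *ᵥ e) ⬝ᵥ v = 0)
    (happrox : quad D (e - v) ≤ ξ * quad A e) : quad A e ≤ ξ * quad (A * D⁻¹ * A) e := by
  have hADA : 0 ≤ quad (A * D⁻¹ * A) e := by
    refine quad_nonneg ?_ e
    simpa only [hA.eq] using hD.inv.posSemidef.conjTranspose_mul_mul_same A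
  have hsq := hA.sq_quad_le_quad_mul_quad_sub hD hv
  rcases le_or_gt (quad A e) 0 with hle | hpos
  · exact hle.trans (mul_nonneg hξ hADA)
  · nlinarith [mul_le_mul_of_nonneg_left happrox hADA]

section CoarseGrid

variable [DecidableEq m]

noncomputable def coarseGridCorrection (A : Matrix n n ℂ) (P : Matrix n m ℂ) : Matrix n n ℂ :=
  1 - P * (Pᴴ * A * P)⁻¹ * (Pᴴ * A)

theorem coarseGridCorrection_mulVec_add (A : Matrix n n ℂ) (P : Matrix n m ℂ) (x : n → ℂ) :
    coarseGridCorrection A P *ᵥ x + P *ᵥ (((Pᴴ * A * P)⁻¹ * (Pᴴ * A)) *ᵥ x) = x := by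
  rw [coarseGridCorrection, sub_mulVec, one_mulVec, mulVec_mulVec, Matrix.mul_assoc,
    sub_add_cancel]

theorem conjTranspose_mulVec_mulVec_coarseGridCorrection {A : Matrix n n ℂ} {P : Matrix n m ℂ}
    (hB : IsUnit (Pᴴ * A * P).det) (x : n → ℂ) :
    Pᴴ *ᵥ (A *ᵥ (coarseGridCorrection A P *ᵥ x)) = 0 := by
  rw [mulVec_mulVec, mulVec_mulVec, coarseGridCorrection, Matrix.mul_sub, Matrix.mul_one]
  simp only [← Matrix.mul_assoc, mul_nonsing_inv _ hB, Matrix.one_mul, sub_self, zero_mulVec]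

theorem PosDef.quad_coarseGridCorrection_mulVec_le {A : Matrix n n ℂ} (hA : A.PosDef)
    {P : Matrix n m ℂ} (hP : Function.Injective P.mulVec) (x : n → ℂ) :
    quad A (coarseGridCorrection A P *ᵥ x) ≤ quad A x := by
  have hB : IsUnit (Pᴴ * A * P).det :=
    (isUnit_iff_isUnit_det _).mp (hA.conjTranspose_mul_mul_same hP).isUnit
  set u := coarseGridCorrection A P *ᵥ x
  set z := ((Pᴴ * A * P)⁻¹ * (Pᴴ * A)) *ᵥ x
  have horth : star (A *ᵥ u) ⬝ᵥ (P *ᵥ z) = 0 :=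
    star_dotProduct_mulVec_eq_zero (conjTranspose_mulVec_mulVec_coarseGridCorrection hB x) z
  calc quad A u ≤ quad A u + quad A (P *ᵥ z) :=
        le_add_of_nonneg_right (quad_nonneg hA.posSemidef _)
    _ = quad A x := by rw [← hA.isHermitian.quad_add horth, coarseGridCorrection_mulVec_add]

end CoarseGrid

end Matrix

/-- Ruge–Stüben two-grid convergence bound: if the smoother satisfies the smoothing
property with constant `δ > 0` and the grid transfer operator `P` satisfies the
approximation property with constant `ξ > 0`, then `ξ ≥ δ` and the two-grid iteration
matrix `TGM = S(I − P(P*AP)⁻¹P*A)` satisfies `‖TGM‖_A ≤ √(1 − δ/ξ)`, i.e.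
`‖TGM x‖²_A ≤ (1 − δ/ξ)‖x‖²_A` for all `x`. -/
theorem ruge_stuben_two_grid (N k : ℕ) (hk : k < N)
    (A S : Matrix (Fin N) (Fin N) ℂ) (hA : A.PosDef)
    (P : Matrix (Fin N) (Fin k) ℂ) (hP : LinearIndependent ℂ fun j => Pᵀ j)
    (δ ξ : ℝ) (hδ : 0 < δ) (hξ : 0 < ξ)
    (hsmooth : ∀ x : Fin N → ℂ,
      quad A (S.mulVec x) ≤
        quad A x - δ * quad (A * (Matrix.diagonal fun i => A i i)⁻¹ * A) x)
    (happrox : ∀ x : Fin N → ℂ, ∃ y : Fin k → ℂ,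
      quad (Matrix.diagonal fun i => A i i) (x - P.mulVec y) ≤ ξ * quad A x) :
    δ ≤ ξ ∧
    ∀ x : Fin N → ℂ,
      quad A ((S * ((1 : Matrix (Fin N) (Fin N) ℂ) - P * (Pᴴ * A * P)⁻¹ * (Pᴴ * A))).mulVec x)
        ≤ (1 - δ / ξ) * quad A x := by
  have hD : (diagonal fun i => A i i).PosDef := PosDef.diagonal fun _ => hA.diag_pos
  have hcontract (e : Fin N → ℂ) (he : Pᴴ *ᵥ (A *ᵥ e) = 0) :
      quad A (S *ᵥ e) ≤ (1 - δ / ξ) * quad A e := by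
    obtain ⟨y, hy⟩ := happrox e
    have hAe := hA.isHermitian.quad_le_mul_quad_of_quad_sub_le hD hξ.le
      (star_dotProduct_mulVec_eq_zero he y) hy
    have hδAe : δ / ξ * quad A e ≤ δ * quad (A * (diagonal fun i => A i i)⁻¹ * A) e := by
      rw [div_mul_eq_mul_div, div_le_iff₀ hξ]
      linarith [mul_le_mul_of_nonneg_left hAe hδ.le]
    linarith [hsmooth e]
  have hrate : 0 ≤ 1 - δ / ξ := by
    obtain ⟨e, he0, he⟩ := exists_ne_zero_mulVec_eq_zero_of_card_lt (Pᴴ * A) (by simpa using hk)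
    rw [← mulVec_mulVec] at he
    exact (mul_nonneg_iff_of_pos_right (quad_pos hA he0)).mp
      ((quad_nonneg hA.posSemidef (S *ᵥ e)).trans (hcontract e he))
  have hPinj : Function.Injective P.mulVec := mulVec_injective_iff.mpr hP
  have hB : IsUnit (Pᴴ * A * P).det :=
    (isUnit_iff_isUnit_det _).mp (hA.conjTranspose_mul_mul_same hPinj).isUnit
  refine ⟨by rwa [sub_nonneg, div_le_one hξ] at hrate, fun x => ?_⟩
  rw [← mulVec_mulVec]
  calc quad A (S *ᵥ (coarseGridCorrection A P *ᵥ x))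
      ≤ (1 - δ / ξ) * quad A (coarseGridCorrection A P *ᵥ x) :=
        hcontract _ (conjTranspose_mulVec_mulVec_coarseGridCorrection hB x)
    _ ≤ (1 - δ / ξ) * quad A x :=
        mul_le_mul_of_nonneg_left (hA.quad_coarseGridCorrection_mulVec_le hPinj x) hrate
end

section
/- (Transfer of the approximation property.) Let A_N and B_N be N×N Hermitian positive definite matrices and P_N an N×k full-rank matrix, and suppose the approximation property holds for A_N: there is ξ > 0 with min_{y∈ℂ^k} ‖x − P_N y‖²_{diag(A_N)} ≤ ξ‖x‖²_{A_N} for all x ∈ ℂ^N. If there are constants ϑ, η > 0 such that A_N ≤ ϑB_N (in the Loewner order) and diag(A_N) ≥ η·diag(B_N) (entrywise on the diagonals), then the approximation property holds for B_N with the same P_N; explicitly, min_{y∈ℂ^k} ‖x − P_N y‖²_{diag(B_N)} ≤ (ξϑ/η)·‖x‖²_{B_N} for all x ∈ ℂ^N. -/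
open Matrix
open scoped ComplexOrder

section Quad

variable {n : Type*} [Fintype n]

theorem quad_sub (A B : Matrix n n ℂ) (x : n → ℂ) :
    quad (A - B) x = quad A x - quad B x := by
  simp only [quad, sub_mulVec, dotProduct_sub, Complex.sub_re]

theorem quad_ofReal_smul (c : ℝ) (A : Matrix n n ℂ) (x : n → ℂ) :
    quad ((c : ℂ) • A) x = c * quad A x := by
  simp only [quad, smul_mulVec, dotProduct_smul, smul_eq_mul, Complex.re_ofReal_mul]

theorem quad_nonneg_of_posSemidef {A : Matrix n n ℂ} (hA : A.PosSemidef) (x : n → ℂ) :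
    0 ≤ quad A x :=
  (Complex.nonneg_iff.mp (hA.dotProduct_mulVec_nonneg x)).1

theorem quad_le_quad_of_posSemidef_sub {A B : Matrix n n ℂ} (h : (B - A).PosSemidef)
    (x : n → ℂ) : quad A x ≤ quad B x :=
  sub_nonneg.mp (quad_sub B A x ▸ quad_nonneg_of_posSemidef h x)

theorem quad_diagonal [DecidableEq n] (d z : n → ℂ) :
    quad (diagonal d) z = ∑ i, (d i).re * Complex.normSq (z i) := by
  simp only [quad, mulVec_diagonal, dotProduct, Pi.star_apply, Complex.re_sum]
  refine Finset.sum_congr rfl fun i _ => ?_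
  rw [mul_left_comm, Complex.star_def, Complex.conj_mul', ← Complex.ofReal_pow,
    Complex.sq_norm, Complex.re_mul_ofReal]

theorem mul_quad_diagonal_le [DecidableEq n] {c : ℝ} {d e : n → ℂ}
    (h : ∀ i, c * (d i).re ≤ (e i).re) (z : n → ℂ) :
    c * quad (diagonal d) z ≤ quad (diagonal e) z := by
  rw [quad_diagonal, quad_diagonal, Finset.mul_sum]
  refine Finset.sum_le_sum fun i _ => ?_
  rw [← mul_assoc]
  exact mul_le_mul_of_nonneg_right (h i) (Complex.normSq_nonneg _)

end Quad

theorem approximation_property_transfer_general (N k : ℕ)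
    (A B : Matrix (Fin N) (Fin N) ℂ)
    (P : Matrix (Fin N) (Fin k) ℂ)
    (ξ ϑ η : ℝ) (hξ : 0 < ξ) (hη : 0 < η)
    (happrox : ∀ x : Fin N → ℂ, ∃ y : Fin k → ℂ,
      quad (Matrix.diagonal fun i => A i i) (x - P.mulVec y) ≤ ξ * quad A x)
    (hLoewner : ((ϑ : ℂ) • B - A).PosSemidef)
    (hdiag : ∀ i, η * (B i i).re ≤ (A i i).re) :
    ∀ x : Fin N → ℂ, ∃ y : Fin k → ℂ,
      quad (Matrix.diagonal fun i => B i i) (x - P.mulVec y) ≤ ξ * ϑ / η * quad B x := by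
  intro x
  obtain ⟨y, hy⟩ := happrox x
  refine ⟨y, ?_⟩
  have hAB : quad A x ≤ ϑ * quad B x := by
    simpa only [quad_ofReal_smul] using quad_le_quad_of_posSemidef_sub hLoewner x
  rw [div_mul_eq_mul_div, le_div_iff₀ hη, mul_comm _ η]
  calc η * quad (diagonal fun i => B i i) (x - P *ᵥ y)
      ≤ quad (diagonal fun i => A i i) (x - P *ᵥ y) := mul_quad_diagonal_le hdiag _
    _ ≤ ξ * quad A x := hy
    _ ≤ ξ * (ϑ * quad B x) := mul_le_mul_of_nonneg_left hAB hξ.le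
    _ = ξ * ϑ * quad B x := by ring

/-- Transfer of the approximation property: if the approximation property holds for `A`
with constant `ξ`, `A ≤ ϑB` in the Loewner order and `diag(A) ≥ η·diag(B)`, then the
approximation property holds for `B` with the same `P` and constant `ξϑ/η`. -/
theorem approximation_property_transfer (N k : ℕ)
    (A B : Matrix (Fin N) (Fin N) ℂ) (hA : A.PosDef) (hB : B.PosDef)
    (P : Matrix (Fin N) (Fin k) ℂ) (hP : LinearIndependent ℂ fun j => Pᵀ j)
    (ξ ϑ η : ℝ) (hξ : 0 < ξ) (hϑ : 0 < ϑ) (hη : 0 < η)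
    (happrox : ∀ x : Fin N → ℂ, ∃ y : Fin k → ℂ,
      quad (Matrix.diagonal fun i => A i i) (x - P.mulVec y) ≤ ξ * quad A x)
    (hLoewner : ((ϑ : ℂ) • B - A).PosSemidef)
    (hdiag : ∀ i, η * (B i i).re ≤ (A i i).re) :
    ∀ x : Fin N → ℂ, ∃ y : Fin k → ℂ,
      quad (Matrix.diagonal fun i => B i i) (x - P.mulVec y) ≤ ξ * ϑ / η * quad B x :=
  approximation_property_transfer_general N k A B P ξ ϑ η hξ hη happrox hLoewner hdiag
end
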